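/- arXiv:1703.09421 — 3 statements merged into one kernel-verified Lean document; each statement's English description precedes it below -/
import Mathlib

section
/- A single-row edge-matching puzzle (with free border at top and bottom) whose allowed manipulations are swaps and flips is solvable if and only if the associated undirected multigraph — with one vertex per color and, for each piece, one edge joining the colors of its left and right edges — has an Eulerian trail. -/
/-- A piece is a 4-tuple of colors: (right, top, left, bottom). -/
abbrev Piece (C : Type*) := C × C × C × C

/-- Flipping a piece exchanges its left and right colors. -/
def flipPiece {C : Type*} (p : Piece C) : Piece C := (p.2.2.1, p.2.1, p.1, p.2.2.2)

/-- A piece possibly flipped, as placed on the board. -/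
def placeFlip {C : Type*} (x : Piece C × Bool) : Piece C :=
  if x.2 then flipPiece x.1 else x.1

/-- The single-row puzzle with swaps and flips is solvable: some ordering of all the
pieces, each possibly flipped, in which the right color of each piece equals the
left color of its successor. -/
def SolvableSwapFlip {C : Type*} (P : Multiset (Piece C)) : Prop :=
  ∃ l : List (Piece C × Bool),
    (↑(l.map Prod.fst) : Multiset (Piece C)) = P ∧
    l.Chain' fun x y => (placeFlip x).1 = (placeFlip y).2.2.1

/-- An Eulerian trail in an undirected multigraph: a list of directed traversals
using every edge exactly once, consecutive traversals head-to-tail. -/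
def IsEulerianTrail {V : Type*} (E : Multiset (Sym2 V)) (l : List (V × V)) : Prop :=
  (↑(l.map fun p => s(p.1, p.2)) : Multiset (Sym2 V)) = E ∧
    l.Chain' fun p q => p.2 = q.1

def HasEulerianTrail {V : Type*} (E : Multiset (Sym2 V)) : Prop :=
  ∃ l : List (V × V), IsEulerianTrail E l

/-!
A placed piece traverses the edge of its colour multigraph from its left colour to its right
colour, so a row of placed pieces is a list of traversals, and the matching condition of the
row is exactly the head-to-tail condition of a trail. Conversely, every traversal of the edge
of a piece is realised by placing that piece flipped or unflipped.
-/

theorem List.exists_map_eq_of_coe_map_eq {α β γ δ : Type*} {p : α → β} {q : α → γ}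
    {f : β → δ} {g : γ → δ} (hlift : ∀ b c, f b = g c → ∃ a, p a = b ∧ q a = c) :
    ∀ {P : Multiset β} {t : List γ}, (↑(t.map g) : Multiset δ) = P.map f →
      ∃ l : List α, (↑(l.map p) : Multiset β) = P ∧ l.map q = t
  | P, [], h => ⟨[], (Multiset.map_eq_zero.mp h.symm).symm, rfl⟩
  | P, c :: t, h => by
    obtain ⟨b, hbP, hbc⟩ : ∃ b ∈ P, f b = g c :=
      Multiset.mem_map.mp (h ▸ by simp)
    obtain ⟨Q, rfl⟩ := Multiset.exists_cons_of_mem hbP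
    have ht : (↑(t.map g) : Multiset δ) = Q.map f := by
      rw [List.map_cons, ← Multiset.cons_coe, Multiset.map_cons, hbc] at h
      exact (Multiset.cons_inj_right _).mp h
    obtain ⟨l, hlP, rfl⟩ := exists_map_eq_of_coe_map_eq hlift ht
    obtain ⟨a, rfl, rfl⟩ := hlift b c hbc
    exact ⟨a :: l, by rw [List.map_cons, ← Multiset.cons_coe, hlP], rfl⟩

section Puzzle

variable {C : Type*}

def traversal (x : Piece C × Bool) : C × C := ((placeFlip x).2.2.1, (placeFlip x).1)

theorem sym2_traversal (x : Piece C × Bool) :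
    s((traversal x).1, (traversal x).2) = s(x.1.2.2.1, x.1.1) := by
  obtain ⟨p, _ | _⟩ := x <;> simp [traversal, placeFlip, flipPiece, Sym2.eq_swap]

theorem exists_traversal_eq_of_sym2_eq (p : Piece C) (t : C × C)
    (h : s(p.2.2.1, p.1) = s(t.1, t.2)) : ∃ x : Piece C × Bool, x.1 = p ∧ traversal x = t := by
  rcases Sym2.eq_iff.mp h with ⟨hl, hr⟩ | ⟨hl, hr⟩
  · exact ⟨(p, false), rfl, by simp [traversal, placeFlip, hl, hr]⟩
  · exact ⟨(p, true), rfl, by simp [traversal, placeFlip, flipPiece, hl, hr]⟩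

theorem isChain_map_traversal_iff (l : List (Piece C × Bool)) :
    (l.map traversal).IsChain (fun s t => s.2 = t.1) ↔
      l.IsChain fun x y => (placeFlip x).1 = (placeFlip y).2.2.1 :=
  List.isChain_map traversal

end Puzzle

theorem solvable_swap_flip_iff_eulerian {C : Type*} (P : Multiset (Piece C)) :
    SolvableSwapFlip P ↔
      HasEulerianTrail (P.map fun p => s(p.2.2.1, p.1)) := by
  constructor
  · rintro ⟨l, rfl, hchain⟩
    refine ⟨l.map traversal, ?_, (isChain_map_traversal_iff l).2 hchain⟩
    simp only [List.map_map, Multiset.map_coe]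
    exact congrArg _ (List.map_congr_left fun x _ => sym2_traversal x)
  · rintro ⟨t, ht, hchain⟩
    obtain ⟨l, hlP, rfl⟩ := List.exists_map_eq_of_coe_map_eq exists_traversal_eq_of_sym2_eq ht
    exact ⟨l, hlP, (isChain_map_traversal_iff l).1 hchain⟩
end

section
/- For a single-row puzzle with in-place rotations only (pieces fixed in position p_0,…,p_{M−1}), define inductively R(p_i) as the set of colors c such that some rotation of p_i has its left color in R(p_{i−1}) and c as its right color, with R(p_{−1}) taken to be all colors. Then the puzzle is solvable if and only if R(p_i) is nonempty for all i, i.e., the greedy left-to-right propagation of feasible right-edge color sets succeeds. -/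
/-- A 90° rotation cyclically shifts the 4-tuple of edge colors. -/
def rotp {C : Type*} (p : Piece C) : Piece C := (p.2.1, p.2.2.1, p.2.2.2, p.1)

/-- `Rset p i` is the set of colors that can appear on the right edge of piece `p i`
in a partial solution of the pieces `p 0, …, p i` with in-place rotations only. -/
def Rset {C : Type*} (p : ℕ → Piece C) : ℕ → Set C
  | 0 => {c | ∃ k : Fin 4, (rotp^[(k : ℕ)] (p 0)).1 = c}
  | i + 1 => {c | ∃ k : Fin 4,
      (rotp^[(k : ℕ)] (p (i + 1))).2.2.1 ∈ Rset p i ∧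
      (rotp^[(k : ℕ)] (p (i + 1))).1 = c}

/-- The single-row puzzle with pieces fixed at positions `0, …, M-1` and in-place
rotations only is solvable iff the greedy left-to-right propagation of feasible
right-edge color sets never becomes empty. -/
theorem rotations_only_greedy {C : Type*} (M : ℕ) (p : ℕ → Piece C) :
    (∃ r : ℕ → Fin 4, ∀ i : ℕ, i + 1 < M →
        (rotp^[((r i : ℕ))] (p i)).1 =
        (rotp^[((r (i + 1) : ℕ))] (p (i + 1))).2.2.1) ↔
      ∀ i : ℕ, i < M → (Rset p i).Nonempty := by
  constructor
  · rintro ⟨r, hr⟩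
    have key : ∀ i, i < M → (rotp^[(r i : ℕ)] (p i)).1 ∈ Rset p i := by
      intro i
      induction i with
      | zero => intro _; exact ⟨r 0, rfl⟩
      | succ n ih =>
        intro h
        have hn : n < M := Nat.lt_of_succ_lt h
        refine ⟨r (n + 1), ?_, rfl⟩
        rw [← hr n h]
        exact ih hn
    intro i hi
    exact ⟨_, key i hi⟩
  · intro h
    have aux : ∀ n, ∀ c ∈ Rset p n, ∃ r : ℕ → Fin 4,
        (∀ i, i + 1 ≤ n → (rotp^[(r i : ℕ)] (p i)).1 =
          (rotp^[(r (i + 1) : ℕ)] (p (i + 1))).2.2.1) ∧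
        (rotp^[(r n : ℕ)] (p n)).1 = c := by
      intro n
      induction n with
      | zero =>
        rintro c ⟨k, hk⟩
        exact ⟨fun _ => k, fun i hi => absurd hi (by omega), hk⟩
      | succ m ih =>
        rintro c ⟨k, hl, hrt⟩
        obtain ⟨r', hchain, hlast⟩ := ih _ hl
        refine ⟨fun j => if j = m + 1 then k else r' j, ?_, by simp [hrt]⟩
        intro j hj
        rcases Nat.lt_or_ge (j + 1) (m + 1) with h1 | h1
        · have e1 : j ≠ m + 1 := by omega
          have e2 : j + 1 ≠ m + 1 := by omega
          simp only [if_neg e1, if_neg e2]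
          exact hchain j (by omega)
        · have hjeq : j = m := by omega
          subst hjeq
          have e1 : j ≠ j + 1 := by omega
          simp only [if_neg e1, if_pos rfl]
          rw [hlast]
          simp
    rcases Nat.eq_zero_or_pos M with hM | hM
    · exact ⟨fun _ => 0, fun i hi => absurd hi (by omega)⟩
    · obtain ⟨m, rfl⟩ : ∃ m, M = m + 1 := ⟨M - 1, by omega⟩
      obtain ⟨c, hc⟩ := h m (by omega)
      obtain ⟨r, hchain, _⟩ := aux m c hc
      exact ⟨r, fun i hi => hchain i (by omega)⟩
end

section
/- In any solved single-row cyclic puzzle with rotations, for each piece exactly two opposite edges of the piece are active (face left/right) and the other two are inactive (face top/bottom); consequently each piece contributes exactly one edge to the multigraph whose vertices are colors and whose edges join the two active colors of each piece, and the multigraph of a solved puzzle has an Eulerian circuit. -/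
/-- A piece together with a chosen rotation, as actually placed. -/
def place {C : Type*} (x : Piece C × Fin 4) : Piece C := rotp^[(x.2 : ℕ)] x.1

def HasEulerianCircuit {V : Type*} (E : Multiset (Sym2 V)) : Prop :=
  ∃ l : List (V × V), IsEulerianTrail E l ∧
    ∀ h : l ≠ [], (l.head h).1 = (l.getLast h).2

/-! Rotating a piece by 90° swaps the roles of its two opposite pairs of edges, so after any
number of rotations the active pair is one of the two. A solved row, read as the list of
(left, right) active colors of its pieces, is a closed walk in the color multigraph using every
piece-edge once: that walk is the Eulerian circuit. -/

section Rotation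

variable {C : Type*}

def activeEdge (p : Piece C) : Sym2 C := s(p.2.2.1, p.1)

def inactiveEdge (p : Piece C) : Sym2 C := s(p.2.1, p.2.2.2)

theorem activeEdge_rotp (p : Piece C) : activeEdge (rotp p) = inactiveEdge p :=
  Sym2.eq_swap

theorem inactiveEdge_rotp (p : Piece C) : inactiveEdge (rotp p) = activeEdge p := rfl

theorem activeEdge_iterate_rotp (p : Piece C) (n : ℕ) :
    activeEdge (rotp^[n] p) = activeEdge p ∨ activeEdge (rotp^[n] p) = inactiveEdge p := by
  induction n generalizing p with
  | zero => exact .inl rfl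
  | succ n ih =>
    rw [Function.iterate_succ_apply, ← activeEdge_rotp p, ← inactiveEdge_rotp p]
    exact (ih (rotp p)).symm

end Rotation

theorem hasEulerianCircuit_of_closed_walk {V : Type*} (l : List (V × V))
    (hwalk : l.IsChain fun p q => p.2 = q.1)
    (hclosed : ∀ h : l ≠ [], (l.head h).1 = (l.getLast h).2) :
    HasEulerianCircuit (↑(l.map fun p => s(p.1, p.2)) : Multiset (Sym2 V)) :=
  ⟨l, ⟨rfl, hwalk⟩, hclosed⟩

/-- In a solved cyclic single-row puzzle with rotations (pieces with chosen
rotations, all adjacent vertical edges matching including the wrap-around pair):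
for every piece the two active (horizontally facing) edges form one of its two
opposite pairs of edges, and the multigraph with one vertex per color and, for
each piece, one edge joining its two active colors has an Eulerian circuit. -/
theorem cyclic_solved_eulerian_circuit {C : Type*} (l : List (Piece C × Fin 4))
    (hchain : l.Chain' fun x y => (place x).1 = (place y).2.2.1)
    (hwrap : ∀ h : l ≠ [], (place (l.getLast h)).1 = (place (l.head h)).2.2.1) :
    (∀ x ∈ l,
        s((place x).2.2.1, (place x).1) = s(x.1.2.2.1, x.1.1) ∨
        s((place x).2.2.1, (place x).1) = s(x.1.2.1, x.1.2.2.2)) ∧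
    HasEulerianCircuit
      (↑(l.map fun x => s((place x).2.2.1, (place x).1)) : Multiset (Sym2 C)) := by
  refine ⟨fun x _ => activeEdge_iterate_rotp x.1 x.2, ?_⟩
  have hcircuit := hasEulerianCircuit_of_closed_walk
    (l.map fun x => ((place x).2.2.1, (place x).1)) ((List.isChain_map _).mpr hchain)
    (fun h => by
      rw [List.head_map, List.getLast_map]
      exact (hwrap (mt List.map_eq_nil_iff.mpr h)).symm)
  rwa [List.map_map] at hcircuit
end
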